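/- arXiv:2103.13731 — 2 statements merged into one kernel-verified Lean document; each statement's English description precedes it below -/
import Mathlib

section
/- Let a, b, c be positive integers and let Γ be the Z-grading of K[x,y,z] with deg x = a, deg y = b, deg z = −c. Let E be the subgroup of Γ-graded automorphisms fixing z, and let T be the subgroup of automorphisms of the form x ↦ x, y ↦ y, z ↦ λz with λ ∈ K nonzero. Then E is a normal subgroup of the group Aut_Γ of Γ-graded automorphisms, E ∩ T = {id}, every Γ-graded automorphism is a composition τ∘φ with τ ∈ T and φ ∈ E, and hence Aut_Γ is the (internal) semidirect product E ⋊ T. -/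
open MvPolynomial

/-- For the `ℤ`-grading of `K[x,y,z]` with weights `w`, an automorphism is *graded*
if it maps each homogeneous component into itself. -/
def IsGraded {K : Type*} [CommRing K] (w : Fin 3 → ℤ)
    (φ : MvPolynomial (Fin 3) K ≃ₐ[K] MvPolynomial (Fin 3) K) : Prop :=
  ∀ (d : ℤ) (f : MvPolynomial (Fin 3) K),
    f.IsWeightedHomogeneous w d → (φ f).IsWeightedHomogeneous w d

/-- `E` is the set of graded automorphisms fixing `z = X 2`. -/
def MemE {K : Type*} [CommRing K] (w : Fin 3 → ℤ)
    (φ : MvPolynomial (Fin 3) K ≃ₐ[K] MvPolynomial (Fin 3) K) : Prop :=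
  IsGraded w φ ∧ φ (X 2) = X 2

/-- `T` is the set of automorphisms `x ↦ x`, `y ↦ y`, `z ↦ λ z` with `λ ≠ 0`. -/
def MemT {K : Type*} [CommRing K]
    (φ : MvPolynomial (Fin 3) K ≃ₐ[K] MvPolynomial (Fin 3) K) : Prop :=
  ∃ l : K, l ≠ 0 ∧ φ (X 0) = X 0 ∧ φ (X 1) = X 1 ∧ φ (X 2) = C l * X 2

/-!
Every monomial of negative weighted degree contains `z`, the only variable of negative weight, so
`z` divides every homogeneous polynomial of degree `-c`. Hence a graded automorphism `φ` satisfies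
`φ z = h z` and `φ⁻¹ z = g z`, so `z = φ (φ⁻¹ z) = h φ(g) z`, and `h` is a unit, that is, a nonzero
constant `λ`. The rescaling `τ : z ↦ λ z` then lies in `T` and `τ⁻¹ φ` lies in `E`; normality of
`E` follows likewise from `φ⁻¹ z ∈ K z`.
-/

namespace MvPolynomial

variable {σ R M : Type*}

section Graded

variable [CommSemiring R] [AddCommMonoid M] {w : σ → M}

theorem IsWeightedHomogeneous.aeval {f : MvPolynomial σ R} {d : M}
    (hf : f.IsWeightedHomogeneous w d) {g : σ → MvPolynomial σ R}
    (hg : ∀ i, (g i).IsWeightedHomogeneous w (w i)) :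
    (aeval g f).IsWeightedHomogeneous w d := by
  induction hf using IsWeightedHomogeneous.induction_on with
  | zero => simpa using isWeightedHomogeneous_zero R w d
  | add p q _ _ hp hq => simpa using hp.add hq
  | monomial m r hm =>
    rw [aeval_monomial, algebraMap_eq, ← hm, Finsupp.weight_apply]
    exact (IsWeightedHomogeneous.prod _ _ _ fun i _ => (hg i).pow (m i)).C_mul r

theorem map_weightedHomogeneousComponent {φ : MvPolynomial σ R →ₗ[R] MvPolynomial σ R}
    (hφ : ∀ d f, f.IsWeightedHomogeneous w d → (φ f).IsWeightedHomogeneous w d)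
    (e : M) (f : MvPolynomial σ R) :
    φ (weightedHomogeneousComponent w e f) = weightedHomogeneousComponent w e (φ f) := by
  classical
  induction f using MvPolynomial.induction_on' with
  | monomial m r =>
    have hm := isWeightedHomogeneous_monomial w m r rfl
    rw [weightedHomogeneousComponent_of_mem (hφ _ _ hm), weightedHomogeneousComponent_of_mem hm,
      apply_ite φ, map_zero]
  | add p q hp hq => simp only [map_add, hp, hq]

theorem isWeightedHomogeneous_symm_apply {φ : MvPolynomial σ R ≃ₐ[R] MvPolynomial σ R}
    (hφ : ∀ d f, f.IsWeightedHomogeneous w d → (φ f).IsWeightedHomogeneous w d)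
    {d : M} {f : MvPolynomial σ R} (hf : f.IsWeightedHomogeneous w d) :
    (φ.symm f).IsWeightedHomogeneous w d := by
  have h : weightedHomogeneousComponent w d (φ.symm f) = φ.symm f := φ.injective <| by
    rw [← φ.toLinearMap_apply, map_weightedHomogeneousComponent hφ, φ.toLinearMap_apply,
      φ.apply_symm_apply, weightedHomogeneousComponent_eq_self hf]
  exact h ▸ weightedHomogeneousComponent_isWeightedHomogeneous d _

end Graded

section NegativeWeight

variable [AddCommMonoid M] [PartialOrder M] [IsOrderedAddMonoid M] {w : σ → M} {j : σ}

theorem weight_nonneg_of_apply_eq_zero (hw : ∀ i ≠ j, 0 ≤ w i) {m : σ →₀ ℕ}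
    (hm : m j = 0) : 0 ≤ Finsupp.weight w m := by
  rw [Finsupp.weight_apply]
  refine Finset.sum_nonneg fun i hi => nsmul_nonneg (hw i ?_) _
  rintro rfl
  exact Finsupp.mem_support_iff.mp hi hm

theorem X_dvd_of_isWeightedHomogeneous_of_neg [CommSemiring R] (hw : ∀ i ≠ j, 0 ≤ w i)
    {f : MvPolynomial σ R} {d : M} (hf : f.IsWeightedHomogeneous w d) (hd : d < 0) :
    X j ∣ f := by
  rw [f.as_sum]
  refine Finset.dvd_sum fun m hm => X_dvd_monomial.mpr (Or.inr fun hmj => ?_)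
  exact (hf (mem_support_iff.mp hm) ▸ weight_nonneg_of_apply_eq_zero hw hmj).not_gt hd

theorem exists_unit_apply_X_eq_C_mul_X [CommRing R] [IsDomain R] (hw : ∀ i ≠ j, 0 ≤ w i)
    (hj : w j < 0) {φ : MvPolynomial σ R ≃ₐ[R] MvPolynomial σ R}
    (hφ : ∀ d f, f.IsWeightedHomogeneous w d → (φ f).IsWeightedHomogeneous w d) :
    ∃ l : Rˣ, φ (X j) = C (l : R) * X j := by
  have hX := isWeightedHomogeneous_X R w j
  obtain ⟨h, hh⟩ := X_dvd_of_isWeightedHomogeneous_of_neg hw (hφ _ _ hX) hj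
  obtain ⟨g, hg⟩ :=
    X_dvd_of_isWeightedHomogeneous_of_neg hw (isWeightedHomogeneous_symm_apply hφ hX) hj
  have hcancel : X j * (h * φ g) = X j * 1 := by
    rw [mul_one, ← mul_assoc, ← hh, ← map_mul, ← hg, φ.apply_symm_apply]
  obtain ⟨l, hl, rfl⟩ := isUnit_iff_eq_C_of_isReduced.mp
    (IsUnit.of_mul_eq_one _ (mul_left_cancel₀ (X_ne_zero j) hcancel))
  exact ⟨hl.unit, by rw [hh, mul_comm, hl.unit_spec]⟩

end NegativeWeight

section Rescaling

variable [CommSemiring R]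

noncomputable def rescaleVars (u : σ → Rˣ) : MvPolynomial σ R ≃ₐ[R] MvPolynomial σ R :=
  AlgEquiv.ofAlgHom (aeval fun i => C (u i : R) * X i) (aeval fun i => C (↑(u i)⁻¹ : R) * X i)
    (algHom_ext fun i => by simp [← mul_assoc, ← C_mul])
    (algHom_ext fun i => by simp [← mul_assoc, ← C_mul])

@[simp]
theorem rescaleVars_X (u : σ → Rˣ) (i : σ) : rescaleVars u (X i) = C (u i : R) * X i := by
  simp [rescaleVars]

theorem isWeightedHomogeneous_rescaleVars [AddCommMonoid M] {w : σ → M} (u : σ → Rˣ)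
    {f : MvPolynomial σ R} {d : M} (hf : f.IsWeightedHomogeneous w d) :
    (rescaleVars u f).IsWeightedHomogeneous w d :=
  hf.aeval fun i => (isWeightedHomogeneous_X R w i).C_mul _

end Rescaling

end MvPolynomial

section Trivariate

variable {K : Type*} [CommRing K] {w : Fin 3 → ℤ}
  {φ ψ : MvPolynomial (Fin 3) K ≃ₐ[K] MvPolynomial (Fin 3) K}

theorem IsGraded.mul (hφ : IsGraded w φ) (hψ : IsGraded w ψ) : IsGraded w (φ * ψ) :=
  fun d _ hf => hφ d _ (hψ d _ hf)

theorem IsGraded.inv (hφ : IsGraded w φ) : IsGraded w φ⁻¹ :=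
  fun _ _ => isWeightedHomogeneous_symm_apply hφ

theorem MemE.conj [IsDomain K] (hw : ∀ i ≠ 2, 0 ≤ w i) (hz : w 2 < 0) (hφ : IsGraded w φ)
    (hψ : MemE w ψ) : MemE w (φ * ψ * φ⁻¹) := by
  obtain ⟨l, hl⟩ := exists_unit_apply_X_eq_C_mul_X hw hz hφ.inv
  refine ⟨(hφ.mul hψ.1).mul hφ.inv, ?_⟩
  calc φ (ψ (φ⁻¹ (X 2))) = φ (ψ (C (l : K) * X 2)) := by rw [hl]
    _ = φ (φ⁻¹ (X 2)) := by
      rw [map_mul, ← algebraMap_eq, ψ.commutes, hψ.2, algebraMap_eq, hl]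
    _ = X 2 := φ.apply_symm_apply _

theorem MemE.eq_one_of_memT (hφ : MemE w φ) (hT : MemT φ) : φ = 1 := by
  obtain ⟨-, -, hx, hy, -⟩ := hT
  refine AlgEquiv.coe_toAlgHom_injective (algHom_ext fun i => ?_)
  fin_cases i
  exacts [hx, hy, hφ.2]

theorem IsGraded.exists_memT_mul_memE [IsDomain K] (hw : ∀ i ≠ 2, 0 ≤ w i) (hz : w 2 < 0)
    (hφ : IsGraded w φ) : ∃ τ ψ, MemT τ ∧ MemE w ψ ∧ φ = τ * ψ := by
  obtain ⟨l, hl⟩ := exists_unit_apply_X_eq_C_mul_X hw hz hφ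
  set τ := rescaleVars (Pi.mulSingle (2 : Fin 3) l)
  have hτz : τ (X 2) = C (l : K) * X 2 := by simp [τ]
  have hτ : IsGraded w τ := fun _ _ hf => isWeightedHomogeneous_rescaleVars _ hf
  refine ⟨τ, τ⁻¹ * φ, ⟨l, l.ne_zero, by simp [τ], by simp [τ], hτz⟩,
    ⟨hτ.inv.mul hφ, ?_⟩, (mul_inv_cancel_left τ φ).symm⟩
  show τ.symm (φ (X 2)) = X 2
  rw [hl, ← hτz, τ.symm_apply_apply]

end Trivariate

theorem graded_automorphism_group_is_semidirect_product_general
    {K : Type*} [Field K]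
    (a b c : ℕ) (hc : 0 < c) :
    (∀ φ ψ : MvPolynomial (Fin 3) K ≃ₐ[K] MvPolynomial (Fin 3) K,
      IsGraded ![(a : ℤ), (b : ℤ), -(c : ℤ)] φ → MemE ![(a : ℤ), (b : ℤ), -(c : ℤ)] ψ →
        MemE ![(a : ℤ), (b : ℤ), -(c : ℤ)] (φ * ψ * φ⁻¹)) ∧
    (∀ φ : MvPolynomial (Fin 3) K ≃ₐ[K] MvPolynomial (Fin 3) K,
      MemE ![(a : ℤ), (b : ℤ), -(c : ℤ)] φ → MemT φ → φ = 1) ∧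
    (∀ φ : MvPolynomial (Fin 3) K ≃ₐ[K] MvPolynomial (Fin 3) K,
      IsGraded ![(a : ℤ), (b : ℤ), -(c : ℤ)] φ →
        ∃ τ ψ : MvPolynomial (Fin 3) K ≃ₐ[K] MvPolynomial (Fin 3) K,
          MemT τ ∧ MemE ![(a : ℤ), (b : ℤ), -(c : ℤ)] ψ ∧ φ = τ * ψ) := by
  have hw : ∀ i ≠ 2, 0 ≤ ![(a : ℤ), (b : ℤ), -(c : ℤ)] i := by
    intro i hi
    fin_cases i <;> simp_all
  have hz : ![(a : ℤ), (b : ℤ), -(c : ℤ)] 2 < 0 := by simpa using hc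
  exact ⟨fun _ _ hφ hψ => hψ.conj hw hz hφ, fun _ hφ hT => hφ.eq_one_of_memT hT,
    fun _ hφ => hφ.exists_memT_mul_memE hw hz⟩

/-- Let `Γ` be the `ℤ`-grading of `K[x,y,z]` with `deg x = a`, `deg y = b`,
`deg z = -c`, `a, b, c > 0`. Then, inside the group `Aut_Γ` of graded automorphisms,
the subgroup `E` of graded automorphisms fixing `z` is normal, `E ∩ T = {1}`, and every
graded automorphism factors as `τ ∘ φ` with `τ ∈ T`, `φ ∈ E`; i.e. `Aut_Γ = E ⋊ T`.
Here `x = X 0`, `y = X 1`, `z = X 2`, and `*` is composition of automorphisms. -/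
theorem graded_automorphism_group_is_semidirect_product
    {K : Type*} [Field K] [IsAlgClosed K] [CharZero K]
    (a b c : ℕ) (ha : 0 < a) (hb : 0 < b) (hc : 0 < c) :
    (∀ φ ψ : MvPolynomial (Fin 3) K ≃ₐ[K] MvPolynomial (Fin 3) K,
      IsGraded ![(a : ℤ), (b : ℤ), -(c : ℤ)] φ → MemE ![(a : ℤ), (b : ℤ), -(c : ℤ)] ψ →
        MemE ![(a : ℤ), (b : ℤ), -(c : ℤ)] (φ * ψ * φ⁻¹)) ∧
    (∀ φ : MvPolynomial (Fin 3) K ≃ₐ[K] MvPolynomial (Fin 3) K,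
      MemE ![(a : ℤ), (b : ℤ), -(c : ℤ)] φ → MemT φ → φ = 1) ∧
    (∀ φ : MvPolynomial (Fin 3) K ≃ₐ[K] MvPolynomial (Fin 3) K,
      IsGraded ![(a : ℤ), (b : ℤ), -(c : ℤ)] φ →
        ∃ τ ψ : MvPolynomial (Fin 3) K ≃ₐ[K] MvPolynomial (Fin 3) K,
          MemT τ ∧ MemE ![(a : ℤ), (b : ℤ), -(c : ℤ)] ψ ∧ φ = τ * ψ) :=
  graded_automorphism_group_is_semidirect_product_general a b c hc
end

section
/- Let a ≥ b be positive integers and c a positive integer with gcd(a,c) = gcd(b,c) = 1, let Γ be the Z-grading of K[x,y,z] with deg x = a, deg y = b, deg z = −c, and let q̂ = max{q ∈ Z : bq ≡ a (mod c) and bq < a}. If q̂ ≥ 2, then there exists a Γ-graded automorphism of K[x,y,z] that is graded-wild, i.e., not a composition of Γ-graded elementary and Γ-graded linear automorphisms. -/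
open MvPolynomial

/-- An automorphism of `K[x,y,z]` is *elementary* if it sends one variable to itself plus
a polynomial in the other two variables and fixes the other variables. -/
def IsElementary {K : Type*} [CommRing K]
    (φ : MvPolynomial (Fin 3) K ≃ₐ[K] MvPolynomial (Fin 3) K) : Prop :=
  ∃ (i : Fin 3) (F : MvPolynomial (Fin 3) K), i ∉ F.vars ∧
    φ (X i) = X i + F ∧ ∀ j : Fin 3, j ≠ i → φ (X j) = X j

/-- An automorphism of `K[x,y,z]` is *linear* if it sends each variable to a `K`-linear
combination of the variables. -/
def IsLinearAut {K : Type*} [CommRing K]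
    (φ : MvPolynomial (Fin 3) K ≃ₐ[K] MvPolynomial (Fin 3) K) : Prop :=
  ∀ i : Fin 3, ∃ c : Fin 3 → K, φ (X i) = ∑ j : Fin 3, C (c j) * X j

/-- A graded automorphism is *graded-tame* if it is a composition of graded elementary
and graded linear automorphisms, and *graded-wild* otherwise. -/
def IsGradedTame {K : Type*} [CommRing K] (w : Fin 3 → ℤ)
    (φ : MvPolynomial (Fin 3) K ≃ₐ[K] MvPolynomial (Fin 3) K) : Prop :=
  ∃ l : List (MvPolynomial (Fin 3) K ≃ₐ[K] MvPolynomial (Fin 3) K),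
    (∀ ψ ∈ l, IsGraded w ψ ∧ (IsElementary ψ ∨ IsLinearAut ψ)) ∧ φ = l.prod

/-!
Write `a = bq + ct` with `t > 0` and let `w = x z^t + y^q`, homogeneous of degree `bq`. Since
`gcd(q, c) = 1` there is `i > 0` with `qi ≡ 1 (mod c)`, and then `u = w^i z^e` with
`e = b(qi - 1)/c ≥ t` is homogeneous of degree `b`. The map `x ↦ (w - (y + u)^q) / z^t`,
`y ↦ y + u`, `z ↦ z` is a graded automorphism of Nagata type: it fixes `w` and `u`, so replacing
`u` by `-u` inverts it.

Since `a > b > 0 > -c`, graded linear automorphisms are diagonal, and the weights force a graded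
elementary automorphism either to add to `y` a polynomial in `x, z` divisible by `x`, or to add
to `x` a polynomial in `y, z` whose `y`-exponents all exceed `q`. Hence every graded-tame
automorphism is an alternating product of factors from the two corresponding triangular monoids,
amalgamated over the diagonal group. Along such a product the `x`-degrees `dₓ, d_y` of the images
of `x` and `y` satisfy `dₓ ≤ d_y` after a factor moving `y`, and `(q + 1) d_y ≤ dₓ` after a factor
moving `x`, because each new factor makes the image of the variable it moves dominate. The Nagata
automorphism has `(dₓ, d_y) = (iq, i)`, which fits neither pattern.
-/

namespace MvPolynomial

section DegreeOfImage

variable {R σ τ : Type*} [CommSemiring R] [NoZeroDivisors R]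

theorem degreeOf_eval_eq_mul {i : σ} {P : MvPolynomial σ R} (hP : 0 < degreeOf i P)
    {p : Polynomial (MvPolynomial σ R)} (hp : ∀ k, degreeOf i (p.coeff k) = 0) :
    degreeOf i (p.eval P) = degreeOf i P * p.natDegree := by
  have hP0 : P ≠ 0 := by rintro rfl; simp at hP
  induction hd : p.natDegree using Nat.strong_induction_on generalizing p with
  | _ d ih =>
    rcases eq_or_ne p 0 with rfl | hp0
    · simp [← hd]
    have hlead : degreeOf i (p.leadingCoeff * P ^ d) = degreeOf i P * d := by
      rw [degreeOf_mul_eq (Polynomial.leadingCoeff_ne_zero.2 hp0) (pow_ne_zero _ hP0),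
        degreeOf_pow_eq _ _ _ hP0, Polynomial.leadingCoeff, hp, zero_add, mul_comm]
    rw [← p.eraseLead_add_monomial_natDegree_leadingCoeff, Polynomial.eval_add,
      Polynomial.eval_monomial, hd]
    rcases p.eraseLead_natDegree_lt_or_eraseLead_eq_zero with hlt | h0
    · have hcoeff : ∀ k, degreeOf i (p.eraseLead.coeff k) = 0 := fun k => by
        rw [Polynomial.eraseLead_coeff]
        split_ifs <;> simp [hp]
      have hrest := ih _ (hd ▸ hlt) hcoeff rfl
      rw [add_comm, degreeOf_add_eq_of_degreeOf_lt, hlead]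
      rw [hrest, hlead]
      exact Nat.mul_lt_mul_of_pos_left (hd ▸ hlt) hP
    · rw [h0, Polynomial.eval_zero, zero_add, hlead]

theorem degreeOf_map_eq_mul_of_forall_ne (φ : MvPolynomial σ R →ₐ[R] MvPolynomial τ R)
    (hφ : Function.Injective φ) {i : τ} {j : σ} (hj : 0 < degreeOf i (φ (X j)))
    (hk : ∀ k ≠ j, degreeOf i (φ (X k)) = 0) (f : MvPolynomial σ R) :
    degreeOf i (φ f) = degreeOf i (φ (X j)) * degreeOf j f := by
  classical
  -- `f` as a polynomial in `X j` over the polynomials in the other variables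
  set p := optionEquivLeft R {k // k ≠ j} (rename (Equiv.optionSubtypeNe j).symm f)
  set ψ : MvPolynomial {k // k ≠ j} R →ₐ[R] MvPolynomial τ R := φ.comp (rename Subtype.val)
  have hψ : Function.Injective ψ := hφ.comp (rename_injective _ Subtype.val_injective)
  have hψdeg : ∀ g, degreeOf i (ψ g) = 0 := fun g => by
    induction g using MvPolynomial.induction_on with
    | C r => simp [ψ]
    | add g h hg hh =>
      rw [map_add]
      exact Nat.le_zero.1 ((degreeOf_add_le _ _ _).trans (by simp [hg, hh]))
    | mul_X g k hg =>
      rw [map_mul]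
      refine Nat.le_zero.1 ((degreeOf_mul_le _ _ _).trans ?_)
      rw [hg]
      simp [ψ, hk k k.2]
  have heval : φ f = (p.map ψ.toRingHom).eval (φ (X j)) := by
    rw [Polynomial.eval_map]
    induction f using MvPolynomial.induction_on with
    | C r => simp [p, ψ]
    | add g h hg hh => simp [p, hg, hh]
    | mul_X g k hg =>
      simp only [p, map_mul, Polynomial.eval₂_mul, ← hg, rename_X,
        Equiv.optionSubtypeNe_symm_apply]
      split_ifs with h
      · subst h
        simp
      · simp [ψ]
  rw [heval, degreeOf_eval_eq_mul hj, Polynomial.natDegree_map_eq_of_injective hψ,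
    degreeOf_eq_natDegree j f]
  simp [hψdeg]

theorem degreeOf_map_eq_mul (φ : MvPolynomial σ R →ₐ[R] MvPolynomial τ R)
    (hφ : Function.Injective φ) {i : τ} {j : σ} (hj : 0 < degreeOf i (φ (X j)))
    {f : MvPolynomial σ R} (hk : ∀ k ∈ f.vars, k ≠ j → degreeOf i (φ (X k)) = 0) :
    degreeOf i (φ f) = degreeOf i (φ (X j)) * degreeOf j f := by
  set s : Set σ := {k | k = j ∨ k ∈ f.vars}
  obtain ⟨f₀, hf₀⟩ := exists_rename_eq_of_vars_subset_range f ((↑) : s → σ)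
    Subtype.val_injective fun k hk => ⟨⟨k, Or.inr hk⟩, rfl⟩
  have hcomp : ∀ k : s, (φ.comp (rename (↑))) (X k) = φ (X k) := fun k => by simp
  have key := degreeOf_map_eq_mul_of_forall_ne (φ.comp (rename (↑)))
    (hφ.comp (rename_injective _ Subtype.val_injective)) (j := ⟨j, Or.inl rfl⟩) (i := i)
    (by rw [hcomp]; exact hj)
    (fun k hkj => by
      rw [hcomp]
      exact hk k (k.2.resolve_left (Subtype.coe_ne_coe.2 hkj)) (Subtype.coe_ne_coe.2 hkj))
    f₀
  rwa [hcomp, AlgHom.comp_apply, hf₀, ← degreeOf_rename_of_injective Subtype.val_injective,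
    hf₀] at key

end DegreeOfImage

section Scaling

variable {σ R : Type*} [CommSemiring R]

@[simp]
theorem algEquiv_C (θ : MvPolynomial σ R ≃ₐ[R] MvPolynomial σ R) (r : R) : θ (C r) = C r :=
  θ.commutes r

theorem support_map_subset_of_forall_vars (θ : MvPolynomial σ R →ₐ[R] MvPolynomial σ R)
    {f : MvPolynomial σ R} (h : ∀ k ∈ f.vars, ∃ c : R, θ (X k) = C c * X k) :
    (θ f).support ⊆ f.support := by
  classical
  let eigen : Submonoid (MvPolynomial σ R) :=
    { carrier := {p | ∃ c : R, θ p = C c * p}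
      one_mem' := ⟨1, by simp⟩
      mul_mem' := by
        rintro p p' ⟨c, hc⟩ ⟨c', hc'⟩
        exact ⟨c * c', by simp only [map_mul, hc, hc']; ring⟩ }
  have hmono : ∀ m ∈ f.support, ∃ c : R, θ (monomial m 1) = C c * monomial m 1 := by
    intro m hm
    rw [monomial_eq, C_1, one_mul]
    refine Submonoid.prod_mem eigen fun k hk => pow_mem ?_ _
    exact h k ((mem_vars_iff_mem_support k).2 ⟨m, hm, hk⟩)
  have hsum : θ f = ∑ m ∈ f.support, θ (monomial m (coeff m f)) := by
    conv_lhs => rw [← support_sum_monomial_coeff f]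
    exact map_sum ..
  rw [← Finset.coe_subset, ← mem_restrictSupport_iff, hsum]
  refine Submodule.sum_mem _ fun m hm => ?_
  obtain ⟨c, hc⟩ := hmono m hm
  rw [← mul_one (coeff m f), ← C_mul_monomial, map_mul, hc, algHom_C, algebraMap_eq,
    ← mul_assoc, ← C_mul, C_mul_monomial, monomial_mem_restrictSupport]
  exact Or.inl hm

end Scaling

section WeightedHomogeneous

variable {σ τ R M : Type*} [CommSemiring R]

theorem isWeightedHomogeneous_aeval [AddCommMonoid M] {w : σ → M} {w' : τ → M}
    {g : σ → MvPolynomial τ R} (hg : ∀ j, IsWeightedHomogeneous w' (g j) (w j))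
    {f : MvPolynomial σ R} {m : M} (hf : IsWeightedHomogeneous w f m) :
    IsWeightedHomogeneous w' (aeval g f) m := by
  induction hf using IsWeightedHomogeneous.induction_on with
  | zero => simpa using isWeightedHomogeneous_zero R w' m
  | add p q _ _ hp hq => simpa using hp.add hq
  | monomial d r hr =>
    rw [aeval_monomial, ← hr, Finsupp.weight_apply, algebraMap_eq]
    exact (IsWeightedHomogeneous.prod _ _ _ fun j _ => (hg j).pow (d j)).C_mul r

theorem IsWeightedHomogeneous.of_mul_X_pow [AddCommGroup M] {w : σ → M}
    {f : MvPolynomial σ R} {j : σ} {n : ℕ} {m : M}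
    (h : IsWeightedHomogeneous w (f * X j ^ n) m) : IsWeightedHomogeneous w f (m - n • w j) := by
  intro d hd
  have hd' := h (d := d + Finsupp.single j n)
    (by rwa [X_pow_eq_monomial, coeff_mul_monomial, mul_one])
  rw [map_add, Finsupp.weight_single] at hd'
  rw [← hd', add_sub_cancel_right]

end WeightedHomogeneous

section Triangular

variable {σ K : Type*} [Field K]

theorem scalar_ne_zero_of_map_X_eq (θ : MvPolynomial σ K ≃ₐ[K] MvPolynomial σ K) {k : σ}
    {c : K} (h : θ (X k) = C c * X k) : c ≠ 0 := by
  rintro rfl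
  exact X_ne_zero k (θ.injective (by simp [h]))

variable (σ K) in
def diagonalSubgroup : Subgroup (MvPolynomial σ K ≃ₐ[K] MvPolynomial σ K) where
  carrier := {θ | ∀ k, ∃ c : K, θ (X k) = C c * X k}
  one_mem' k := ⟨1, by simp⟩
  mul_mem' {θ ψ} hθ hψ k := by
    obtain ⟨c, hc⟩ := hθ k
    obtain ⟨c', hc'⟩ := hψ k
    exact ⟨c' * c, by rw [AlgEquiv.mul_apply, hc', map_mul, hc, algEquiv_C, ← mul_assoc, C_mul]⟩
  inv_mem' {θ} hθ k := by
    obtain ⟨c, hc⟩ := hθ k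
    refine ⟨c⁻¹, θ.injective ?_⟩
    rw [← AlgEquiv.mul_apply, mul_inv_cancel, AlgEquiv.one_apply, map_mul, hc, algEquiv_C,
      ← mul_assoc, ← C_mul, inv_mul_cancel₀ (scalar_ne_zero_of_map_X_eq θ hc), C_1, one_mul]

variable (K) in
def triangularSubmonoid (v : σ) (P : (σ →₀ ℕ) → Prop) :
    Submonoid (MvPolynomial σ K ≃ₐ[K] MvPolynomial σ K) where
  carrier := {θ | ∃ α : K, α ≠ 0 ∧ ∃ f : MvPolynomial σ K, (∀ m ∈ f.support, m v = 0 ∧ P m) ∧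
    θ (X v) = C α * X v + f ∧ ∀ k ≠ v, ∃ c : K, θ (X k) = C c * X k}
  one_mem' := ⟨1, one_ne_zero, 0, by simp, by simp, fun k _ => ⟨1, by simp⟩⟩
  mul_mem' := by
    classical
    rintro θ ψ ⟨α, hα, f, hf, hθv, hθk⟩ ⟨α', hα', f', hf', hψv, hψk⟩
    have hθf' : (θ f').support ⊆ f'.support := by
      refine support_map_subset_of_forall_vars θ.toAlgHom fun k hk => hθk k ?_
      rintro rfl
      obtain ⟨m, hm, hkm⟩ := (mem_vars_iff_mem_support k).1 hk
      exact Finsupp.mem_support_iff.1 hkm (hf' m hm).1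
    refine ⟨α' * α, mul_ne_zero hα' hα, C α' * f + θ f', fun m hm => ?_, ?_, fun k hk => ?_⟩
    · rcases Finset.mem_union.1 (support_add hm) with hm | hm
      · exact hf m (support_smul (by rwa [← C_mul']))
      · exact hf' m (hθf' hm)
    · rw [AlgEquiv.mul_apply, hψv, map_add, map_mul, algEquiv_C, hθv, C_mul]
      ring
    · obtain ⟨c', hc'⟩ := hψk k hk
      obtain ⟨c, hc⟩ := hθk k hk
      exact ⟨c' * c, by rw [AlgEquiv.mul_apply, hc', map_mul, algEquiv_C, hc, ← mul_assoc, C_mul]⟩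

theorem mem_triangularSubmonoid {v : σ} {P : (σ →₀ ℕ) → Prop}
    {θ : MvPolynomial σ K ≃ₐ[K] MvPolynomial σ K} :
    θ ∈ triangularSubmonoid K v P ↔ ∃ α : K, α ≠ 0 ∧ ∃ f : MvPolynomial σ K,
      (∀ m ∈ f.support, m v = 0 ∧ P m) ∧ θ (X v) = C α * X v + f ∧
        ∀ k ≠ v, ∃ c : K, θ (X k) = C c * X k :=
  Iff.rfl

theorem diagonalSubgroup_le_triangularSubmonoid (v : σ) (P : (σ →₀ ℕ) → Prop) :
    (diagonalSubgroup σ K).toSubmonoid ≤ triangularSubmonoid K v P := by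
  intro θ hθ
  obtain ⟨α, hα⟩ := hθ v
  exact mem_triangularSubmonoid.2
    ⟨α, scalar_ne_zero_of_map_X_eq θ hα, 0, by simp, by simpa using hα, fun k _ => hθ k⟩

theorem exists_ne_zero_of_mem_triangularSubmonoid {v : σ} {P : (σ →₀ ℕ) → Prop}
    {θ : MvPolynomial σ K ≃ₐ[K] MvPolynomial σ K} (hθ : θ ∈ triangularSubmonoid K v P)
    (hθD : θ ∉ diagonalSubgroup σ K) :
    ∃ α : K, α ≠ 0 ∧ ∃ f : MvPolynomial σ K, f ≠ 0 ∧ (∀ m ∈ f.support, m v = 0 ∧ P m) ∧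
      θ (X v) = C α * X v + f ∧ ∀ k ≠ v, ∃ c : K, θ (X k) = C c * X k := by
  obtain ⟨α, hα, f, hf, hθv, hθk⟩ := mem_triangularSubmonoid.1 hθ
  refine ⟨α, hα, f, fun hf0 => hθD fun k => ?_, hf, hθv, hθk⟩
  by_cases hk : k = v
  · exact ⟨α, by rw [hk, hθv, hf0, add_zero]⟩
  · exact hθk k hk

end Triangular

end MvPolynomial

section AlternatingProduct

variable {G : Type*} [Group G] {S : Bool → Submonoid G} {D : Subgroup G}

variable (S D) in
/-- Reduced words in the amalgam of `S true` and `S false` over `D`; the index is the side of the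
last factor. -/
inductive IsAlternatingProduct : Bool → G → Prop
  | of_mem {b g} : g ∈ S b → IsAlternatingProduct b g
  | mul {b g h} : IsAlternatingProduct (!b) g → h ∈ S b → h ∉ D → IsAlternatingProduct b (g * h)

theorem IsAlternatingProduct.mul_mem_subgroup (hD : ∀ b, D.toSubmonoid ≤ S b) {b : Bool}
    {g d : G} (hg : IsAlternatingProduct S D b g) (hd : d ∈ D) :
    IsAlternatingProduct S D b (g * d) := by
  cases hg with
  | of_mem hg => exact .of_mem (mul_mem hg (hD _ hd))
  | @mul _ g h hg hh hhD =>
    rw [mul_assoc]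
    refine .mul hg (mul_mem hh (hD _ hd)) fun hhd => hhD ?_
    simpa using mul_mem hhd (inv_mem hd)

theorem IsAlternatingProduct.exists_mul_mem (hD : ∀ b, D.toSubmonoid ≤ S b) {s b : Bool}
    {g h : G} (hg : IsAlternatingProduct S D s g) (hh : h ∈ S b) :
    ∃ s', IsAlternatingProduct S D s' (g * h) := by
  by_cases hhD : h ∈ D
  · exact ⟨s, hg.mul_mem_subgroup hD hhD⟩
  obtain rfl | rfl : s = !b ∨ s = b := by cases s <;> cases b <;> simp
  · exact ⟨b, .mul hg hh hhD⟩
  cases hg with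
  | of_mem hg => exact ⟨s, .of_mem (mul_mem hg hh)⟩
  | @mul _ g h' hg hh' _ =>
    rw [mul_assoc]
    by_cases hD' : h' * h ∈ D
    · exact ⟨_, hg.mul_mem_subgroup hD hD'⟩
    · exact ⟨s, .mul hg (mul_mem hh' hh) hD'⟩

theorem exists_isAlternatingProduct_prod (hD : ∀ b, D.toSubmonoid ≤ S b) {l : List G}
    (hl : ∀ h ∈ l, ∃ b, h ∈ S b) : ∃ s, IsAlternatingProduct S D s l.prod := by
  induction l using List.reverseRecOn with
  | nil => exact ⟨true, .of_mem (one_mem _)⟩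
  | append_singleton l h ih =>
    obtain ⟨s, hs⟩ := ih fun h' h'l => hl h' (List.mem_append_left _ h'l)
    obtain ⟨b, hb⟩ := hl h (by simp)
    simpa using hs.exists_mul_mem hD hb

end AlternatingProduct

section GradedGenerators

variable {K : Type*} [Field K]

theorem weight_fin_three (w : Fin 3 → ℤ) (m : Fin 3 →₀ ℕ) :
    Finsupp.weight w m = m 0 * w 0 + m 1 * w 1 + m 2 * w 2 := by
  simp [Finsupp.weight_eq_sum, Fin.sum_univ_three]

theorem mem_diagonalSubgroup_of_isLinearAut {w : Fin 3 → ℤ} (hw : Function.Injective w)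
    {ψ : MvPolynomial (Fin 3) K ≃ₐ[K] MvPolynomial (Fin 3) K} (hg : IsGraded w ψ)
    (hl : IsLinearAut ψ) : ψ ∈ diagonalSubgroup (Fin 3) K := by
  intro v
  obtain ⟨c, hc⟩ := hl v
  have hhom := hg _ _ (isWeightedHomogeneous_X K w v)
  rw [hc] at hhom
  have hcj : ∀ j ≠ v, c j = 0 := by
    intro j hj
    by_contra hcj
    refine hj (hw ?_)
    have hcoeff : coeff (Finsupp.single j 1) (∑ i, C (c i) * X i) = c j := by
      simp [coeff_sum, coeff_C_mul, coeff_X, Finsupp.single_eq_single_iff]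
    simpa [Finsupp.weight_single] using hhom (d := Finsupp.single j 1) (by rwa [hcoeff])
  refine ⟨c v, ?_⟩
  rw [hc, Finset.sum_eq_single v (fun j _ hj => by simp [hcj j hj]) (by simp)]

variable (K) in
/-- `true`: `y ↦ βy + g(x, z)` with `x ∣ g`; `false`: `x ↦ αx + f(y, z)` with every
`y`-exponent of `f` larger than `q`. -/
def triangularPair (q : ℕ) :
    Bool → Submonoid (MvPolynomial (Fin 3) K ≃ₐ[K] MvPolynomial (Fin 3) K)
  | true => triangularSubmonoid K 1 fun m => 0 < m 0
  | false => triangularSubmonoid K 0 fun m => q < m 1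

theorem diagonalSubgroup_le_triangularPair {q : ℕ} (s : Bool) :
    (diagonalSubgroup (Fin 3) K).toSubmonoid ≤ triangularPair K q s := by
  cases s <;> exact diagonalSubgroup_le_triangularSubmonoid _ _

theorem exists_isWeightedHomogeneous_of_isElementary {w : Fin 3 → ℤ}
    {ψ : MvPolynomial (Fin 3) K ≃ₐ[K] MvPolynomial (Fin 3) K} (hg : IsGraded w ψ)
    (he : IsElementary ψ) :
    ∃ (v : Fin 3) (F : MvPolynomial (Fin 3) K), (∀ m ∈ F.support, m v = 0) ∧
      IsWeightedHomogeneous w F (w v) ∧ ψ (X v) = X v + F ∧ ∀ k ≠ v, ψ (X k) = X k := by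
  obtain ⟨v, F, hvF, hψv, hψk⟩ := he
  refine ⟨v, F, fun m hm => ?_, ?_, hψv, hψk⟩
  · by_contra h
    exact hvF ((mem_vars_iff_mem_support v).2 ⟨m, hm, Finsupp.mem_support_iff.2 h⟩)
  · have h := (hg _ _ (isWeightedHomogeneous_X K w v)).sub (isWeightedHomogeneous_X K w v)
    rwa [hψv, add_sub_cancel_left] at h

theorem exists_mem_triangularPair_of_isElementary {a b c q t : ℕ} (hb : 0 < b) (hc : 0 < c)
    (ht : 0 < t) (hA : a = b * q + c * t)
    {ψ : MvPolynomial (Fin 3) K ≃ₐ[K] MvPolynomial (Fin 3) K}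
    (hg : IsGraded ![(a : ℤ), (b : ℤ), -(c : ℤ)] ψ) (he : IsElementary ψ) :
    ∃ s, ψ ∈ triangularPair K q s := by
  set w : Fin 3 → ℤ := ![(a : ℤ), (b : ℤ), -(c : ℤ)]
  obtain ⟨v, F, hFv, hF, hψv, hψk⟩ := exists_isWeightedHomogeneous_of_isElementary hg he
  have hwt : ∀ m ∈ F.support, (m 0 : ℤ) * a + m 1 * b = m 2 * c + w v := fun m hm => by
    rw [← hF (mem_support_iff.1 hm), weight_fin_three]
    simp [w]
  have hAZ : (a : ℤ) = b * q + c * t := by exact_mod_cast hA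
  have hψ1 : ∀ k ≠ v, ∃ c : K, ψ (X k) = C c * X k := fun k hk => ⟨1, by simp [hψk k hk]⟩
  obtain rfl | rfl | rfl : v = 0 ∨ v = 1 ∨ v = 2 := by fin_cases v <;> simp
  · refine ⟨false, 1, one_ne_zero, F, fun m hm => ⟨hFv m hm, ?_⟩, by simp [hψv], hψ1⟩
    have h := hwt m hm
    simp only [hFv m hm, show w 0 = a from rfl] at h
    push_cast at h
    -- `b * (m 1 - q) = c * (t + m 2) > 0`
    nlinarith
  · refine ⟨true, 1, one_ne_zero, F, fun m hm => ⟨hFv m hm, Nat.pos_of_ne_zero fun h0 => ?_⟩,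
      by simp [hψv], hψ1⟩
    have h := hwt m hm
    simp only [hFv m hm, h0, show w 1 = b from rfl] at h
    push_cast at h
    -- `0 = m 2 * c + b > 0`
    nlinarith
  · have hF0 : F = 0 := by
      refine support_eq_empty.1 (Finset.eq_empty_of_forall_notMem fun m hm => ?_)
      have h := hwt m hm
      simp only [hFv m hm, show w 2 = -c from rfl] at h
      push_cast at h
      -- `m 0 * a + m 1 * b = -c < 0`
      nlinarith
    refine ⟨false, 1, one_ne_zero, 0, by simp, by simp [hψk 0 (by decide)], fun k _ => ⟨1, ?_⟩⟩
    by_cases hk2 : k = 2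
    · simp [hk2, hψv, hF0]
    · simp [hψk k hk2]

theorem exists_mem_triangularPair_of_isGraded {a b c q t : ℕ} (hb : 0 < b) (hc : 0 < c)
    (ht : 0 < t) (hq : 0 < q) (hA : a = b * q + c * t)
    {ψ : MvPolynomial (Fin 3) K ≃ₐ[K] MvPolynomial (Fin 3) K}
    (hg : IsGraded ![(a : ℤ), (b : ℤ), -(c : ℤ)] ψ) (hψ : IsElementary ψ ∨ IsLinearAut ψ) :
    ∃ s, ψ ∈ triangularPair K q s := by
  rcases hψ with he | hl
  · exact exists_mem_triangularPair_of_isElementary hb hc ht hA hg he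
  · have hba : b < a := by nlinarith
    have hw : Function.Injective ![(a : ℤ), (b : ℤ), -(c : ℤ)] := by
      intro j k h
      fin_cases j <;> fin_cases k <;> simp at h ⊢ <;> omega
    exact ⟨true, diagonalSubgroup_le_triangularPair true
      (mem_diagonalSubgroup_of_isLinearAut hw hg hl)⟩

end GradedGenerators

section Nagata

variable (K : Type*) [Field K] (q t i s : ℕ)

noncomputable def nagataInvariant : MvPolynomial (Fin 3) K := X 0 * X 2 ^ t + X 1 ^ q

noncomputable def nagataShift : MvPolynomial (Fin 3) K :=
  nagataInvariant K q t ^ i * X 2 ^ s * X 2 ^ t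

/-- `(w - (y + εu)^q) / z^t` for `w = nagataInvariant` and `u = nagataShift`: the geometric sum
divides `(y + εu)^q - y^q` by `εu`, and `u / z^t` is a polynomial. -/
noncomputable def nagataX (ε : K) : MvPolynomial (Fin 3) K :=
  X 0 - C ε * nagataInvariant K q t ^ i * X 2 ^ s *
    ∑ k ∈ Finset.range q, (X 1 + C ε * nagataShift K q t i s) ^ k * X 1 ^ (q - 1 - k)

noncomputable def nagataFlow (ε : K) : MvPolynomial (Fin 3) K →ₐ[K] MvPolynomial (Fin 3) K :=
  aeval ![nagataX K q t i s ε, X 1 + C ε * nagataShift K q t i s, X 2]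

variable {K q t i s}

theorem nagataX_mul_X_pow (ε : K) :
    nagataX K q t i s ε * X 2 ^ t =
      nagataInvariant K q t - (X 1 + C ε * nagataShift K q t i s) ^ q := by
  have hgeom := geom_sum₂_mul (X 1 + C ε * nagataShift K q t i s) (X 1) q
  rw [add_sub_cancel_left] at hgeom
  rw [nagataX]
  rw [nagataShift, nagataInvariant] at hgeom ⊢
  linear_combination -hgeom

@[simp]
theorem nagataFlow_X_zero (ε : K) : nagataFlow K q t i s ε (X 0) = nagataX K q t i s ε := by
  simp [nagataFlow]

@[simp]
theorem nagataFlow_X_one (ε : K) :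
    nagataFlow K q t i s ε (X 1) = X 1 + C ε * nagataShift K q t i s := by
  simp [nagataFlow]

@[simp]
theorem nagataFlow_X_two (ε : K) : nagataFlow K q t i s ε (X 2) = X 2 := by
  simp [nagataFlow]

theorem nagataFlow_nagataInvariant (ε : K) :
    nagataFlow K q t i s ε (nagataInvariant K q t) = nagataInvariant K q t := by
  conv_lhs => rw [nagataInvariant]
  simp only [map_add, map_mul, map_pow, nagataFlow_X_zero, nagataFlow_X_one, nagataFlow_X_two,
    nagataX_mul_X_pow, sub_add_cancel]

theorem nagataFlow_nagataShift (ε : K) :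
    nagataFlow K q t i s ε (nagataShift K q t i s) = nagataShift K q t i s := by
  simp only [nagataShift, map_mul, map_pow, nagataFlow_nagataInvariant, nagataFlow_X_two]

theorem nagataFlow_nagataX (ε δ : K) :
    nagataFlow K q t i s ε (nagataX K q t i s δ) = nagataX K q t i s (ε + δ) := by
  refine mul_right_cancel₀ (pow_ne_zero t (X_ne_zero (R := K) (2 : Fin 3))) ?_
  conv_lhs => rw [← nagataFlow_X_two (q := q) (t := t) (i := i) (s := s) ε, ← map_pow,
    ← map_mul, nagataX_mul_X_pow]
  rw [nagataX_mul_X_pow, map_sub, map_pow, map_add, map_mul, nagataFlow_nagataInvariant,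
    nagataFlow_X_one, nagataFlow_nagataShift, algHom_C, algebraMap_eq, C_add]
  ring

theorem nagataFlow_comp (ε δ : K) :
    (nagataFlow K q t i s ε).comp (nagataFlow K q t i s δ) = nagataFlow K q t i s (ε + δ) := by
  ext j : 1
  fin_cases j
  · simp [nagataFlow_nagataX]
  · simp [nagataFlow_nagataShift, C_add]
    ring
  · simp

theorem nagataFlow_zero : nagataFlow K q t i s 0 = AlgHom.id K _ := by
  ext j : 1
  fin_cases j <;> simp [nagataX]

variable (K q t i s) in
noncomputable def nagataAut : MvPolynomial (Fin 3) K ≃ₐ[K] MvPolynomial (Fin 3) K :=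
  AlgEquiv.ofAlgHom (nagataFlow K q t i s 1) (nagataFlow K q t i s (-1))
    (by rw [nagataFlow_comp, add_neg_cancel, nagataFlow_zero])
    (by rw [nagataFlow_comp, neg_add_cancel, nagataFlow_zero])

@[simp]
theorem nagataAut_apply (f : MvPolynomial (Fin 3) K) :
    nagataAut K q t i s f = nagataFlow K q t i s 1 f :=
  rfl

theorem degreeOf_nagataInvariant : degreeOf 0 (nagataInvariant K q t) = 1 := by
  rw [nagataInvariant, degreeOf_add_eq_of_degreeOf_lt] <;>
    simp [degreeOf_mul_X_pow_of_ne, degreeOf_X_pow_of_ne]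

theorem degreeOf_nagataShift : degreeOf 0 (nagataShift K q t i s) = i := by
  have hW : nagataInvariant K q t ≠ 0 := fun h => by
    simpa [h] using degreeOf_nagataInvariant (K := K) (q := q) (t := t)
  simp [nagataShift, degreeOf_mul_X_pow_of_ne, degreeOf_pow_eq _ _ _ hW, degreeOf_nagataInvariant]

theorem degreeOf_nagataAut_X_one (hi : 0 < i) :
    degreeOf 0 (nagataAut K q t i s (X 1)) = i := by
  rw [nagataAut_apply, nagataFlow_X_one, C_1, one_mul, add_comm,
    degreeOf_add_eq_of_degreeOf_lt] <;>
  simp [degreeOf_nagataShift, degreeOf_X_of_ne, hi]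

theorem degreeOf_nagataAut_X_zero (hi : 0 < i) (hq : 2 ≤ q) :
    degreeOf 0 (nagataAut K q t i s (X 0)) = i * q := by
  have hY := degreeOf_nagataAut_X_one (K := K) (q := q) (t := t) (s := s) hi
  rw [nagataAut_apply, nagataFlow_X_one] at hY
  have hY0 : X 1 + C 1 * nagataShift K q t i s ≠ 0 := fun h => by
    rw [h, degreeOf_zero] at hY
    omega
  have hYq : degreeOf 0 ((X 1 + C 1 * nagataShift K q t i s) ^ q) = i * q := by
    rw [degreeOf_pow_eq 0 _ q hY0, hY, mul_comm]
  rw [nagataAut_apply, nagataFlow_X_zero,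
    ← degreeOf_mul_X_pow_of_ne (p := nagataX K q t i s 1) t (show (0 : Fin 3) ≠ 2 by decide),
    nagataX_mul_X_pow, sub_eq_neg_add, degreeOf_add_eq_of_degreeOf_lt, degreeOf_neg, hYq]
  rw [degreeOf_neg, hYq, degreeOf_nagataInvariant]
  nlinarith

theorem isWeightedHomogeneous_nagataInvariant {a b c : ℕ} (hA : a = b * q + c * t) :
    IsWeightedHomogeneous ![(a : ℤ), (b : ℤ), -(c : ℤ)] (nagataInvariant K q t) (b * q) := by
  set w : Fin 3 → ℤ := ![(a : ℤ), (b : ℤ), -(c : ℤ)]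
  have hw : w 0 = a ∧ w 1 = b ∧ w 2 = -c := ⟨rfl, rfl, rfl⟩
  refine IsWeightedHomogeneous.add ?_ ?_
  · convert (isWeightedHomogeneous_X K w 0).mul ((isWeightedHomogeneous_X K w 2).pow t) using 1
    simp only [hw, nsmul_eq_mul, hA]
    push_cast
    ring
  · convert (isWeightedHomogeneous_X K w 1).pow q using 1
    simp only [hw, nsmul_eq_mul]
    ring

theorem isWeightedHomogeneous_nagataShift {a b c : ℕ} (hA : a = b * q + c * t)
    (hB : b * q * i = b + c * (s + t)) :
    IsWeightedHomogeneous ![(a : ℤ), (b : ℤ), -(c : ℤ)] (nagataShift K q t i s) b := by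
  set w : Fin 3 → ℤ := ![(a : ℤ), (b : ℤ), -(c : ℤ)]
  have hBZ : (b : ℤ) * q * i = b + c * (s + t) := by exact_mod_cast hB
  rw [nagataShift]
  convert (((isWeightedHomogeneous_nagataInvariant hA).pow i).mul
    ((isWeightedHomogeneous_X K w 2).pow s)).mul ((isWeightedHomogeneous_X K w 2).pow t) using 1
  simp only [show w 2 = -c from rfl, nsmul_eq_mul]
  linarith

theorem nagataAut_isGraded {a b c : ℕ} (hA : a = b * q + c * t)
    (hB : b * q * i = b + c * (s + t)) :
    IsGraded ![(a : ℤ), (b : ℤ), -(c : ℤ)] (nagataAut K q t i s) := by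
  set w : Fin 3 → ℤ := ![(a : ℤ), (b : ℤ), -(c : ℤ)]
  have hw : w 0 = a ∧ w 1 = b ∧ w 2 = -c := ⟨rfl, rfl, rfl⟩
  have hAZ : (a : ℤ) = b * q + c * t := by exact_mod_cast hA
  have hY : IsWeightedHomogeneous w (X 1 + C (1 : K) * nagataShift K q t i s) (w 1) :=
    (isWeightedHomogeneous_X K w 1).add ((isWeightedHomogeneous_nagataShift hA hB).C_mul 1)
  have hYq :
      IsWeightedHomogeneous w ((X 1 + C (1 : K) * nagataShift K q t i s) ^ q) (b * q) := by
    convert hY.pow q using 1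
    simp only [hw, nsmul_eq_mul]
    ring
  have hXz : IsWeightedHomogeneous w (nagataX K q t i s 1 * X 2 ^ t) (b * q) := by
    rw [nagataX_mul_X_pow]
    exact (isWeightedHomogeneous_nagataInvariant hA).sub hYq
  have hX0 : IsWeightedHomogeneous w (nagataX K q t i s 1) (w 0) := by
    have h := hXz.of_mul_X_pow
    rwa [show (b * q : ℤ) - t • w 2 = w 0 by simp only [hw, nsmul_eq_mul]; linarith] at h
  intro d f hf
  refine isWeightedHomogeneous_aeval (fun j => ?_) hf
  fin_cases j
  exacts [hX0, hY, isWeightedHomogeneous_X K w 2]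

end Nagata

section DegreeProfile

variable {K : Type*} [Field K] {q : ℕ}

theorem degreeOf_map_eq_mul_of_forall_mem_support
    (θ : MvPolynomial (Fin 3) K ≃ₐ[K] MvPolynomial (Fin 3) K) {γ : K}
    (h2 : θ (X 2) = C γ * X 2) {v o : Fin 3} (hvo : ∀ k : Fin 3, k = v ∨ k = o ∨ k = 2)
    {f : MvPolynomial (Fin 3) K} (hf : ∀ m ∈ f.support, m v = 0)
    (ho : 0 < degreeOf 0 (θ (X o))) :
    degreeOf 0 (θ f) = degreeOf 0 (θ (X o)) * degreeOf o f := by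
  refine degreeOf_map_eq_mul θ.toAlgHom θ.injective ho fun k hk hko => ?_
  rcases hvo k with rfl | rfl | rfl
  · obtain ⟨m, hm, hkm⟩ := (mem_vars_iff_mem_support k).1 hk
    exact absurd (hf m hm) (Finsupp.mem_support_iff.1 hkm)
  · exact absurd rfl hko
  · have h : degreeOf 0 (C γ * X 2 : MvPolynomial (Fin 3) K) ≤ 0 :=
      (degreeOf_C_mul_le _ _ _).trans (by simp [degreeOf_X])
    simpa [h2] using h

variable (K) in
def YProfile (θ : MvPolynomial (Fin 3) K ≃ₐ[K] MvPolynomial (Fin 3) K) : Prop :=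
  (∃ γ : K, θ (X 2) = C γ * X 2) ∧ 0 < degreeOf 0 (θ (X 0)) ∧
    degreeOf 0 (θ (X 0)) ≤ degreeOf 0 (θ (X 1))

variable (K) in
def XProfile (q : ℕ) (θ : MvPolynomial (Fin 3) K ≃ₐ[K] MvPolynomial (Fin 3) K) : Prop :=
  (∃ γ : K, θ (X 2) = C γ * X 2) ∧ 0 < degreeOf 0 (θ (X 1)) ∧
    (q + 1) * degreeOf 0 (θ (X 1)) ≤ degreeOf 0 (θ (X 0))

theorem yProfile_mul {θ ψ : MvPolynomial (Fin 3) K ≃ₐ[K] MvPolynomial (Fin 3) K}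
    (h2 : ∃ γ : K, θ (X 2) = C γ * X 2) (hlt : degreeOf 0 (θ (X 1)) < degreeOf 0 (θ (X 0)))
    (hψ : ψ ∈ triangularPair K q true) (hψD : ψ ∉ diagonalSubgroup (Fin 3) K) :
    YProfile K (θ * ψ) := by
  obtain ⟨γ, hγ⟩ := h2
  obtain ⟨β, -, g, hg0, hg, hψ1, hψk⟩ := exists_ne_zero_of_mem_triangularSubmonoid hψ hψD
  obtain ⟨α, hα⟩ := hψk 0 (by decide)
  obtain ⟨γ', hγ'⟩ := hψk 2 (by decide)
  have hθg : degreeOf 0 (θ g) = degreeOf 0 (θ (X 0)) * degreeOf 0 g :=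
    degreeOf_map_eq_mul_of_forall_mem_support θ hγ (v := 1) (by decide)
      (fun m hm => (hg m hm).1) (by omega)
  have hg_pos : 0 < degreeOf 0 g := by
    obtain ⟨m, hm⟩ := support_nonempty.2 hg0
    exact (hg m hm).2.trans_le (le_degreeOf_of_mem_support 0 hm)
  have hx : degreeOf 0 ((θ * ψ) (X 0)) = degreeOf 0 (θ (X 0)) := by
    rw [AlgEquiv.mul_apply, hα, map_mul, algEquiv_C,
      degreeOf_C_mul _ _ (mem_nonZeroDivisors_of_ne_zero (scalar_ne_zero_of_map_X_eq ψ hα))]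
  have hy : degreeOf 0 ((θ * ψ) (X 1)) = degreeOf 0 (θ (X 0)) * degreeOf 0 g := by
    rw [AlgEquiv.mul_apply, hψ1, map_add, map_mul, algEquiv_C, add_comm,
      degreeOf_add_eq_of_degreeOf_lt, hθg]
    calc degreeOf 0 (C β * θ (X 1)) ≤ degreeOf 0 (θ (X 1)) := degreeOf_C_mul_le _ _ _
      _ < degreeOf 0 (θ (X 0)) := hlt
      _ ≤ degreeOf 0 (θ g) := hθg ▸ Nat.le_mul_of_pos_right _ hg_pos
  refine ⟨⟨γ' * γ, ?_⟩, by omega, ?_⟩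
  · rw [AlgEquiv.mul_apply, hγ', map_mul, algEquiv_C, hγ, ← mul_assoc, C_mul]
  · rw [hx, hy]
    exact Nat.le_mul_of_pos_right _ hg_pos

theorem xProfile_mul (hq : 0 < q) {θ ψ : MvPolynomial (Fin 3) K ≃ₐ[K] MvPolynomial (Fin 3) K}
    (h2 : ∃ γ : K, θ (X 2) = C γ * X 2) (hpos : 0 < degreeOf 0 (θ (X 0)))
    (hle : degreeOf 0 (θ (X 0)) ≤ degreeOf 0 (θ (X 1)))
    (hψ : ψ ∈ triangularPair K q false) (hψD : ψ ∉ diagonalSubgroup (Fin 3) K) :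
    XProfile K q (θ * ψ) := by
  obtain ⟨γ, hγ⟩ := h2
  obtain ⟨α, -, f, hf0, hf, hψ0, hψk⟩ := exists_ne_zero_of_mem_triangularSubmonoid hψ hψD
  obtain ⟨β, hβ⟩ := hψk 1 (by decide)
  obtain ⟨γ', hγ'⟩ := hψk 2 (by decide)
  have hθf : degreeOf 0 (θ f) = degreeOf 0 (θ (X 1)) * degreeOf 1 f :=
    degreeOf_map_eq_mul_of_forall_mem_support θ hγ (v := 0) (by decide)
      (fun m hm => (hf m hm).1) (by omega)
  have hf_deg : q < degreeOf 1 f := by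
    obtain ⟨m, hm⟩ := support_nonempty.2 hf0
    exact (hf m hm).2.trans_le (le_degreeOf_of_mem_support 1 hm)
  have hy : degreeOf 0 ((θ * ψ) (X 1)) = degreeOf 0 (θ (X 1)) := by
    rw [AlgEquiv.mul_apply, hβ, map_mul, algEquiv_C,
      degreeOf_C_mul _ _ (mem_nonZeroDivisors_of_ne_zero (scalar_ne_zero_of_map_X_eq ψ hβ))]
  have hx : degreeOf 0 ((θ * ψ) (X 0)) = degreeOf 0 (θ (X 1)) * degreeOf 1 f := by
    rw [AlgEquiv.mul_apply, hψ0, map_add, map_mul, algEquiv_C, add_comm,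
      degreeOf_add_eq_of_degreeOf_lt, hθf]
    calc degreeOf 0 (C α * θ (X 0)) ≤ degreeOf 0 (θ (X 0)) := degreeOf_C_mul_le _ _ _
      _ < degreeOf 0 (θ f) := by rw [hθf]; nlinarith
  refine ⟨⟨γ' * γ, ?_⟩, by omega, ?_⟩
  · rw [AlgEquiv.mul_apply, hγ', map_mul, algEquiv_C, hγ, ← mul_assoc, C_mul]
  · rw [hx, hy, mul_comm]
    exact Nat.mul_le_mul_left _ hf_deg

theorem degreeOf_lt_of_mem_triangularPair_false
    {θ : MvPolynomial (Fin 3) K ≃ₐ[K] MvPolynomial (Fin 3) K}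
    (hθ : θ ∈ triangularPair K q false) :
    (∃ γ : K, θ (X 2) = C γ * X 2) ∧ degreeOf 0 (θ (X 1)) < degreeOf 0 (θ (X 0)) := by
  obtain ⟨α, hα, f, hf, hθ0, hθk⟩ := mem_triangularSubmonoid.1 hθ
  obtain ⟨β, hβ⟩ := hθk 1 (by decide)
  have hf_deg : degreeOf 0 f = 0 :=
    Nat.le_zero.1 (degreeOf_le_iff.2 fun m hm => (hf m hm).1.le)
  have hx : degreeOf 0 (C α * X 0 : MvPolynomial (Fin 3) K) = 1 := by
    rw [degreeOf_C_mul _ _ (mem_nonZeroDivisors_of_ne_zero hα)]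
    simp
  refine ⟨hθk 2 (by decide), ?_⟩
  rw [hθ0, degreeOf_add_eq_of_degreeOf_lt (by omega), hx, hβ]
  exact lt_of_le_of_lt (degreeOf_C_mul_le _ _ _) (by simp [degreeOf_X])

variable (K) in
def degreeProfile (q : ℕ) :
    Bool → (MvPolynomial (Fin 3) K ≃ₐ[K] MvPolynomial (Fin 3) K) → Prop
  | true, θ => θ ∈ diagonalSubgroup (Fin 3) K ∨ YProfile K θ
  | false, θ => θ ∈ triangularPair K q false ∨ XProfile K q θ

theorem IsAlternatingProduct.degreeProfile (hq : 0 < q) {s : Bool}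
    {θ : MvPolynomial (Fin 3) K ≃ₐ[K] MvPolynomial (Fin 3) K}
    (h : IsAlternatingProduct (triangularPair K q) (diagonalSubgroup (Fin 3) K) s θ) :
    degreeProfile K q s θ := by
  induction h with
  | @of_mem s θ hθ =>
    cases s
    · exact Or.inl hθ
    · by_cases hθD : θ ∈ diagonalSubgroup (Fin 3) K
      · exact Or.inl hθD
      · refine Or.inr ?_
        simpa using yProfile_mul (θ := 1) ⟨1, by simp⟩ (by simp [degreeOf_X]) hθ hθD
  | @mul s θ ψ _ hψ hψD ih =>
    cases s
    · rcases ih with hθD | ⟨h2, hpos, hle⟩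
      · exact Or.inl (mul_mem (diagonalSubgroup_le_triangularPair false hθD) hψ)
      · exact Or.inr (xProfile_mul hq h2 hpos hle hψ hψD)
    · rcases ih with hθ | ⟨h2, hpos, hle⟩
      · obtain ⟨h2, hlt⟩ := degreeOf_lt_of_mem_triangularPair_false hθ
        exact Or.inr (yProfile_mul h2 hlt hψ hψD)
      · exact Or.inr (yProfile_mul h2 (by nlinarith) hψ hψD)

theorem not_degreeProfile {θ : MvPolynomial (Fin 3) K ≃ₐ[K] MvPolynomial (Fin 3) K} {i : ℕ}
    (hi : 0 < i) (hq : 2 ≤ q) (h0 : degreeOf 0 (θ (X 0)) = i * q)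
    (h1 : degreeOf 0 (θ (X 1)) = i) (s : Bool) : ¬ degreeProfile K q s θ := by
  have hX : ∀ j (c : K), degreeOf 0 (C c * X j : MvPolynomial (Fin 3) K) ≤ if 0 = j then 1 else 0 :=
    fun j c => (degreeOf_C_mul_le _ _ _).trans (degreeOf_X 0 j).le
  cases s
  · rintro (hθ | ⟨-, -, hle⟩)
    · obtain ⟨-, -, -, -, -, hθk⟩ := mem_triangularSubmonoid.1 hθ
      obtain ⟨β, hβ⟩ := hθk 1 (by decide)
      have h := hX 1 β
      simp [← hβ, h1] at h
      omega
    · nlinarith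
  · rintro (hθ | ⟨-, -, hle⟩)
    · obtain ⟨α, hα⟩ := hθ 0
      have h := hX 0 α
      simp [← hα, h0] at h
      nlinarith
    · nlinarith

end DegreeProfile

theorem exists_eq_mul_add_mul_of_modEq {a b c : ℕ} {q : ℤ} (hq : 0 ≤ q)
    (hmod : b * q ≡ a [ZMOD c]) (hlt : b * q < a) :
    ∃ n t : ℕ, (n : ℤ) = q ∧ 0 < c * t ∧ a = b * n + c * t := by
  lift q to ℕ using hq
  obtain ⟨t, ht⟩ := hmod.dvd
  have hct : (0 : ℤ) < c * t := by linarith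
  lift t to ℕ using (pos_of_mul_pos_right hct (by positivity)).le
  exact ⟨q, t, rfl, by exact_mod_cast hct, by linarith⟩

theorem exists_mul_eq_one_add_mul {q c : ℕ} (hqc : Nat.Coprime q c) (hq : 0 < q) (hc : 0 < c)
    (t : ℕ) : ∃ i k, t ≤ k ∧ q * i = 1 + c * k := by
  obtain ⟨m, -, hm⟩ := Nat.exists_mul_mod_eq_of_coprime 1 hqc hc.ne'
  have hqi : q * (m + c * (t + 1)) = q * m + c * (q * (t + 1)) := by ring
  have hmod : 1 ≡ q * (m + c * (t + 1)) [MOD c] := by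
    rw [hqi, Nat.ModEq, Nat.add_mul_mod_self_left, hm]
  have hle : c * t + c ≤ q * (m + c * (t + 1)) :=
    le_trans (by rw [mul_add_one]; exact Nat.le_add_left _ m) (Nat.le_mul_of_pos_left _ hq)
  obtain ⟨k, hk⟩ := (Nat.modEq_iff_dvd' (by omega)).1 hmod
  refine ⟨m + c * (t + 1), k, ?_, by omega⟩
  by_contra! hkt
  have h : c * k + c ≤ c * t := by simpa [mul_add_one] using Nat.mul_le_mul_left c hkt
  omega

theorem exists_graded_wild_automorphism_of_qhat_ge_two_general
    {K : Type*} [Field K]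
    (a b c : ℕ) (hb : 0 < b)
    (hac : Nat.gcd a c = 1)
    (qhat : ℤ)
    (hqhat : IsGreatest {q : ℤ | (b : ℤ) * q ≡ (a : ℤ) [ZMOD (c : ℤ)] ∧ (b : ℤ) * q < (a : ℤ)} qhat)
    (hq2 : 2 ≤ qhat) :
    ∃ φ : MvPolynomial (Fin 3) K ≃ₐ[K] MvPolynomial (Fin 3) K,
      IsGraded ![(a : ℤ), (b : ℤ), -(c : ℤ)] φ ∧
      ¬ IsGradedTame ![(a : ℤ), (b : ℤ), -(c : ℤ)] φ := by
  obtain ⟨q, t, rfl, hct, hA⟩ := exists_eq_mul_add_mul_of_modEq (by omega) hqhat.1.1 hqhat.1.2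
  have hq : 2 ≤ q := by exact_mod_cast hq2
  have hc : 0 < c := Nat.pos_of_mul_pos_right hct
  have ht : 0 < t := Nat.pos_of_mul_pos_left hct
  have hqc : Nat.Coprime q c := by
    rw [hA, ← Nat.Coprime, mul_comm c t, Nat.coprime_add_mul_right_left] at hac
    exact hac.coprime_mul_left
  obtain ⟨i, k, htk, hqi⟩ := exists_mul_eq_one_add_mul hqc (by omega) hc t
  have hi : 0 < i := Nat.pos_of_mul_pos_left (by omega : 0 < q * i)
  have hbk : b * k - t + t = b * k := Nat.sub_add_cancel (htk.trans (Nat.le_mul_of_pos_left k hb))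
  refine ⟨nagataAut K q t i (b * k - t),
    nagataAut_isGraded hA (by rw [hbk, mul_assoc, hqi]; ring), ?_⟩
  rintro ⟨l, hl, hφ⟩
  obtain ⟨s, hs⟩ := exists_isAlternatingProduct_prod diagonalSubgroup_le_triangularPair
    fun ψ hψ => exists_mem_triangularPair_of_isGraded hb hc ht (by omega) hA (hl ψ hψ).1 (hl ψ hψ).2
  rw [← hφ] at hs
  exact not_degreeProfile hi hq (degreeOf_nagataAut_X_zero hi hq) (degreeOf_nagataAut_X_one hi) s
    (hs.degreeProfile (by omega))

/-- Let `a ≥ b > 0`, `c > 0` with `gcd(a,c) = gcd(b,c) = 1`, let `Γ` be the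
`ℤ`-grading of `K[x,y,z]` with `deg x = a`, `deg y = b`, `deg z = -c`, and let
`q̂ = max {q ∈ ℤ : bq ≡ a (mod c), bq < a}`. If `q̂ ≥ 2`, then there exists a
`Γ`-graded automorphism of `K[x,y,z]` which is graded-wild. -/
theorem exists_graded_wild_automorphism_of_qhat_ge_two
    {K : Type*} [Field K] [IsAlgClosed K] [CharZero K]
    (a b c : ℕ) (ha : 0 < a) (hb : 0 < b) (hc : 0 < c) (hab : b ≤ a)
    (hac : Nat.gcd a c = 1) (hbc : Nat.gcd b c = 1)
    (qhat : ℤ)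
    (hqhat : IsGreatest {q : ℤ | (b : ℤ) * q ≡ (a : ℤ) [ZMOD (c : ℤ)] ∧ (b : ℤ) * q < (a : ℤ)} qhat)
    (hq2 : 2 ≤ qhat) :
    ∃ φ : MvPolynomial (Fin 3) K ≃ₐ[K] MvPolynomial (Fin 3) K,
      IsGraded ![(a : ℤ), (b : ℤ), -(c : ℤ)] φ ∧
      ¬ IsGradedTame ![(a : ℤ), (b : ℤ), -(c : ℤ)] φ :=
  exists_graded_wild_automorphism_of_qhat_ge_two_general a b c hb hac qhat hqhat hq2
end
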